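/- arXiv:2410.14361 — 3 statements merged into one kernel-verified Lean document; each statement's English description precedes it below -/
import Mathlib

section
/- For every parameter θ ∈ ℝ^D, the Hessian matrix of the map δ ↦ KL(θ + δ, θ) at δ = 0 equals the Fisher information matrix J(θ). -/
/-!
Write `KL (θ + δ) θ = ∑ a, φ_a (p_a (θ + δ))` with `φ_a t = t log (t / p_a θ)`, so that
`φ_a' t = log (t / p_a θ) + 1` and `φ_a'' t = 1 / t`. At `δ = 0` the chain rule gives
`∂ᵢ∂ⱼ KL = ∑ a, (∂ᵢ p_a ∂ⱼ p_a / p_a + ∂ᵢ∂ⱼ p_a)`. The first sum is the Fisher information,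
since `∂ log p_a = ∂ p_a / p_a`, and the second vanishes because `∑ a, p_a ≡ 1`.
-/

open Real

section

variable {E : Type*} [NormedAddCommGroup E] [NormedSpace ℝ E] {ι : Type*} [Fintype ι]

theorem hasDerivAt_log_div_const {c t : ℝ} (hc : c ≠ 0) (ht : t ≠ 0) :
    HasDerivAt (fun t => log (t / c)) t⁻¹ t := by
  convert ((hasDerivAt_id' t).div_const c).log (div_ne_zero ht hc) using 1
  field_simp

theorem hasDerivAt_mul_log_div_const {c t : ℝ} (hc : c ≠ 0) (ht : t ≠ 0) :
    HasDerivAt (fun t => t * log (t / c)) (log (t / c) + 1) t := by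
  refine ((hasDerivAt_id' t).fun_mul (hasDerivAt_log_div_const hc ht)).congr_deriv ?_
  field_simp

theorem sum_fderiv_apply_eq_zero_of_sum_eq_const {g : ι → E → ℝ} {s : ℝ}
    (hsum : ∀ y, ∑ a, g a y = s) {x : E} (hg : ∀ a, DifferentiableAt ℝ (g a) x) (v : E) :
    ∑ a, fderiv ℝ (g a) x v = 0 := by
  rw [← sum_apply, ← fderiv_fun_sum fun a _ => hg a]
  simp [hsum]

theorem fderiv_sum_mul_log_div_apply {g : ι → E → ℝ} {c : ι → ℝ} (hc : ∀ a, c a ≠ 0) {y : E}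
    (hg : ∀ a, DifferentiableAt ℝ (g a) y) (hy : ∀ a, g a y ≠ 0) (v : E) :
    fderiv ℝ (fun z => ∑ a, g a z * log (g a z / c a)) y v =
      ∑ a, (log (g a y / c a) + 1) * fderiv ℝ (g a) y v := by
  have hterm a := (hasDerivAt_mul_log_div_const (hc a) (hy a)).comp_hasFDerivAt y (hg a).hasFDerivAt
  have hsum : HasFDerivAt (fun z => ∑ a, g a z * log (g a z / c a))
      (∑ a, (log (g a y / c a) + 1) • fderiv ℝ (g a) y) y :=
    HasFDerivAt.fun_sum fun a _ => hterm a
  rw [hsum.fderiv]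
  simp

theorem ContDiff.differentiable_fderiv_apply {F : Type*} [NormedAddCommGroup F]
    [NormedSpace ℝ F] {g : E → F} (hg : ContDiff ℝ 2 g) (v : E) :
    Differentiable ℝ (fun y => fderiv ℝ g y v) :=
  ((hg.fderiv_right (m := 1) le_rfl).differentiable one_ne_zero).clm_apply
    (differentiable_const v)

theorem hasFDerivAt_log_div_add_one_mul_fderiv_apply {g : E → ℝ} (hg : ContDiff ℝ 2 g) {x : E}
    (hx : g x ≠ 0) (v : E) :
    HasFDerivAt (fun y => (log (g y / g x) + 1) * fderiv ℝ g y v)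
      (((g x)⁻¹ * fderiv ℝ g x v) • fderiv ℝ g x + fderiv ℝ (fun y => fderiv ℝ g y v) x) x := by
  have hlog := ((hasDerivAt_log_div_const hx hx).comp_hasFDerivAt x
    (hg.differentiable two_ne_zero x).hasFDerivAt).add_const 1
  refine (hlog.fun_mul (hg.differentiable_fderiv_apply v x).hasFDerivAt).congr_fderiv ?_
  simp [div_self hx, smul_smul, add_comm, mul_comm]

theorem inv_mul_fderiv_mul_fderiv_eq_mul_fderiv_log {g : E → ℝ} {x : E}
    (hg : DifferentiableAt ℝ g x) (hx : g x ≠ 0) (u v : E) :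
    (g x)⁻¹ * fderiv ℝ g x u * fderiv ℝ g x v =
      g x * fderiv ℝ (fun y => log (g y)) x u * fderiv ℝ (fun y => log (g y)) x v := by
  simp only [fderiv.log hg hx, smul_apply, smul_eq_mul]
  field_simp

theorem fderiv_fderiv_sum_mul_log_div_apply {p : E → ι → ℝ}
    (hp : ∀ a, ContDiff ℝ 2 (fun y => p y a)) (hne : ∀ y a, p y a ≠ 0) {s : ℝ}
    (hsum : ∀ y, ∑ a, p y a = s) (x u v : E) :
    fderiv ℝ (fun y => fderiv ℝ (fun z => ∑ a, p z a * log (p z a / p x a)) y v) x u =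
      ∑ a, p x a * fderiv ℝ (fun y => log (p y a)) x u * fderiv ℝ (fun y => log (p y a)) x v := by
  have hdiff a : Differentiable ℝ (fun y => p y a) := (hp a).differentiable two_ne_zero
  have hdir : (fun y => fderiv ℝ (fun z => ∑ a, p z a * log (p z a / p x a)) y v) =
      fun y => ∑ a, (log (p y a / p x a) + 1) * fderiv ℝ (fun z => p z a) y v :=
    funext fun y => fderiv_sum_mul_log_div_apply (hne x) (fun a => hdiff a y) (hne y) v
  have hdir_hasFDerivAt := HasFDerivAt.fun_sum (u := Finset.univ) fun a _ =>
    hasFDerivAt_log_div_add_one_mul_fderiv_apply (hp a) (hne x a) v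
  -- Differentiating `∑ a, p y a = s` twice kills the terms with second derivatives of `p`.
  have hsum_fderiv : ∀ y, ∑ a, fderiv ℝ (fun z => p z a) y v = 0 :=
    fun y => sum_fderiv_apply_eq_zero_of_sum_eq_const hsum (fun a => hdiff a y) v
  have hsum_fderiv_fderiv := sum_fderiv_apply_eq_zero_of_sum_eq_const hsum_fderiv
    (fun a => (hp a).differentiable_fderiv_apply v x) u
  rw [hdir, hdir_hasFDerivAt.fderiv]
  simp only [sum_apply, add_apply, smul_apply, smul_eq_mul,
    Finset.sum_add_distrib, hsum_fderiv_fderiv, add_zero]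
  refine Finset.sum_congr rfl fun a _ => ?_
  rw [mul_right_comm, inv_mul_fderiv_mul_fderiv_eq_mul_fderiv_log (hdiff a x) (hne x a)]

end

theorem hessian_of_kl_eq_fisher_information_general {A : Type*} [Fintype A] {D : ℕ}
    (f : EuclideanSpace ℝ (Fin D) → A → ℝ)
    (hpos : ∀ θ a, 0 < f θ a)
    (hsum : ∀ θ, ∑ a, f θ a = 1)
    (hdiff : ∀ a, ContDiff ℝ 2 (fun θ => f θ a))
    (KL : EuclideanSpace ℝ (Fin D) → EuclideanSpace ℝ (Fin D) → ℝ)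
    (hKL : ∀ θ' θ, KL θ' θ = ∑ a, f θ' a * Real.log (f θ' a / f θ a))
    (θ : EuclideanSpace ℝ (Fin D))
    (J : Matrix (Fin D) (Fin D) ℝ)
    (hJ : ∀ i j, J i j = ∑ a, f θ a *
      fderiv ℝ (fun θ' => Real.log (f θ' a)) θ (EuclideanSpace.single i 1) *
      fderiv ℝ (fun θ' => Real.log (f θ' a)) θ (EuclideanSpace.single j 1)) :
    Matrix.of (fun i j =>
      fderiv ℝ (fun δ => fderiv ℝ (fun δ' => KL (θ + δ') θ) δ (EuclideanSpace.single j 1))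
        0 (EuclideanSpace.single i 1)) = J := by
  ext i j
  set F : EuclideanSpace ℝ (Fin D) → ℝ := fun z => ∑ a, f z a * log (f z a / f θ a)
  have hKL_shift : (fun δ' => KL (θ + δ') θ) = fun δ' => F (θ + δ') := funext fun _ => hKL _ _
  rw [Matrix.of_apply, hKL_shift]
  simp only [fderiv_comp_add_left]
  rw [fderiv_comp_add_left (f := fun y => fderiv ℝ F y (EuclideanSpace.single j 1)), add_zero, hJ]
  exact fderiv_fderiv_sum_mul_log_div_apply hdiff (fun y a => (hpos y a).ne') hsum θ _ _

/-- For every parameter `θ ∈ ℝ^D`, the Hessian matrix of the map `δ ↦ KL (θ + δ) θ`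
at `δ = 0` equals the Fisher information matrix `J θ`. -/
theorem hessian_of_kl_eq_fisher_information {A : Type*} [Fintype A] [Nonempty A] {D : ℕ}
    (f : EuclideanSpace ℝ (Fin D) → A → ℝ)
    (hpos : ∀ θ a, 0 < f θ a)
    (hsum : ∀ θ, ∑ a, f θ a = 1)
    (hdiff : ∀ a, ContDiff ℝ 2 (fun θ => f θ a))
    (KL : EuclideanSpace ℝ (Fin D) → EuclideanSpace ℝ (Fin D) → ℝ)
    (hKL : ∀ θ' θ, KL θ' θ = ∑ a, f θ' a * Real.log (f θ' a / f θ a))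
    (θ : EuclideanSpace ℝ (Fin D))
    (J : Matrix (Fin D) (Fin D) ℝ)
    (hJ : ∀ i j, J i j = ∑ a, f θ a *
      fderiv ℝ (fun θ' => Real.log (f θ' a)) θ (EuclideanSpace.single i 1) *
      fderiv ℝ (fun θ' => Real.log (f θ' a)) θ (EuclideanSpace.single j 1)) :
    Matrix.of (fun i j =>
      fderiv ℝ (fun δ => fderiv ℝ (fun δ' => KL (θ + δ') θ) δ (EuclideanSpace.single j 1))
        0 (EuclideanSpace.single i 1)) = J :=
  hessian_of_kl_eq_fisher_information_general f hpos hsum hdiff KL hKL θ J hJ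
end

section
/- For every parameter θ ∈ ℝ^D, the function δ ↦ KL(θ + δ, θ) − (1/2) δᵀ J(θ) δ is O(‖δ‖³) as δ → 0; that is, the Kullback–Leibler divergence admits the second-order Taylor expansion KL(θ + δ, θ) = (1/2) δᵀ J(θ) δ + O(‖δ‖³). -/
/-! With `r a δ = f (θ + δ) a / f θ a`, normalisation of both distributions gives
`KL (θ + δ) θ = ∑ a, f θ a * klFun (r a δ)` where `klFun x = x log x + 1 - x`. Near `x = 1`,
`klFun x = (x - 1)² / 2 + O((x - 1)³)`, and since `r a` is `C²` with `r a 0 = 1` and derivative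
the score `∂ log f(θ) a`, we get `r a δ - 1 = ∂ log f(θ) a δ + O(‖δ‖²)`. Hence each summand is
`f θ a * (∂ log f(θ) a δ)² / 2 + O(‖δ‖³)`, and these sum to `δᵀ J δ / 2`. -/

open Filter Asymptotics Topology InformationTheory

section Taylor

variable {E F : Type*} [NormedAddCommGroup E] [NormedSpace ℝ E]
  [NormedAddCommGroup F] [NormedSpace ℝ F]

theorem isBigO_norm_pow_succ_of_fderiv_of_apply_eq_zero {f : E → F} {a : E} {n : ℕ}
    (hdf : ∀ᶠ x in 𝓝 a, DifferentiableAt ℝ f x) (hderiv : fderiv ℝ f =O[𝓝 a] (‖· - a‖ ^ n))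
    (hf₀ : f a = 0) : f =O[𝓝 a] (‖· - a‖ ^ (n + 1)) := by
  have := isBigO_norm_rpow_add_one_of_fderiv_of_apply_eq_zero (Nat.cast_nonneg n) hdf
    (by simpa only [Real.rpow_natCast] using hderiv) hf₀
  simpa only [← Nat.cast_add_one, Real.rpow_natCast] using this

theorem isBigO_sub_pow_succ_of_hasDerivAt_of_apply_eq_zero {g g' : ℝ → F} {a : ℝ} {n : ℕ}
    (hg : ∀ᶠ x in 𝓝 a, HasDerivAt g (g' x) x) (hg' : g' =O[𝓝 a] fun x ↦ (x - a) ^ n)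
    (hg₀ : g a = 0) : g =O[𝓝 a] fun x ↦ (x - a) ^ (n + 1) := by
  have hfderiv : fderiv ℝ g =O[𝓝 a] g' :=
    .of_bound 1 <| hg.mono fun x hx ↦ by simp [hx.hasFDerivAt.fderiv]
  refine (isBigO_norm_pow_succ_of_fderiv_of_apply_eq_zero (n := n)
    (hg.mono fun x hx ↦ hx.differentiableAt) (hfderiv.trans ?_) hg₀).trans_le fun x ↦ by simp
  exact hg'.trans_le fun x ↦ by simp

theorem ContDiffAt.isBigO_sub_sub_fderiv {f : E → F} {a : E} (hf : ContDiffAt ℝ 2 f a) :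
    (fun x ↦ f x - f a - fderiv ℝ f a (x - a)) =O[𝓝 a] (‖· - a‖ ^ 2) := by
  have hdiff : ∀ᶠ x in 𝓝 a, DifferentiableAt ℝ f x :=
    (hf.eventually (by simp)).mono fun x hx ↦ hx.differentiableAt (by norm_num)
  have hfderiv : fderiv ℝ (fun x ↦ f x - f a - fderiv ℝ f a (x - a))
      =ᶠ[𝓝 a] fun x ↦ fderiv ℝ f x - fderiv ℝ f a :=
    hdiff.mono fun x hx ↦ by
      have h : HasFDerivAt (fun x ↦ f x - f a - fderiv ℝ f a (x - a)) _ x :=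
        (hx.hasFDerivAt.sub_const (f a)).sub
          ((fderiv ℝ f a).hasFDerivAt.comp x ((hasFDerivAt_id x).sub_const a))
      simpa using h.fderiv
  refine isBigO_norm_pow_succ_of_fderiv_of_apply_eq_zero (n := 1)
    (hdiff.mono fun x hx ↦ by fun_prop) ?_ (by simp)
  refine IsBigO.congr' ?_ hfderiv.symm EventuallyEq.rfl
  exact ((hf.fderiv_right (m := 1) (by norm_num)).differentiableAt one_ne_zero).isBigO_sub
    |>.trans_le fun x ↦ by simp

open Real in
theorem klFun_sub_sq_div_two_isBigO :
    (fun x ↦ klFun x - (x - 1) ^ 2 / 2) =O[𝓝 1] fun x ↦ (x - 1) ^ 3 := by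
  have hne : ∀ᶠ x in 𝓝 (1 : ℝ), x ≠ 0 := eventually_ne_nhds one_ne_zero
  have hlog : (fun x ↦ log x - (x - 1)) =O[𝓝 1] fun x ↦ (x - 1) ^ 2 := by
    refine isBigO_sub_pow_succ_of_hasDerivAt_of_apply_eq_zero (g' := fun x ↦ x⁻¹ - 1)
      (hne.mono fun x hx ↦ (hasDerivAt_log hx).sub ((hasDerivAt_id x).sub_const 1)) ?_ (by simp)
    have := ((differentiableAt_inv (𝕜 := ℝ) one_ne_zero).sub_const (1 : ℝ)).isBigO_sub
    simpa using this
  refine isBigO_sub_pow_succ_of_hasDerivAt_of_apply_eq_zero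
    (hne.mono fun x hx ↦ (hasDerivAt_klFun hx).sub ?_) hlog (by simp [klFun_one])
  exact ((((hasDerivAt_id' x).sub_const 1).fun_pow 2).div_const 2).congr_deriv (by ring)

theorem klFun_comp_sub_sq_div_two_isBigO {g : E → ℝ} (hg : ContDiffAt ℝ 2 g 0) (hg₀ : g 0 = 1) :
    (fun x ↦ klFun (g x) - fderiv ℝ g 0 x ^ 2 / 2) =O[𝓝 0] (‖·‖ ^ 3) := by
  have hdiff : DifferentiableAt ℝ g 0 := hg.differentiableAt (by norm_num)
  have hlin : fderiv ℝ g 0 =O[𝓝 0] (‖·‖) := (fderiv ℝ g 0).isBigO_id _ |>.norm_right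
  have hsub : (fun x ↦ g x - 1) =O[𝓝 0] (‖·‖) := by
    simpa [hg₀] using hdiff.isBigO_sub.norm_right
  have hrem : (fun x ↦ g x - 1 - fderiv ℝ g 0 x) =O[𝓝 0] (‖·‖ ^ 2) := by
    simpa [hg₀] using hg.isBigO_sub_sub_fderiv
  have hkl : (fun x ↦ klFun (g x) - (g x - 1) ^ 2 / 2) =O[𝓝 0] (‖·‖ ^ 3) :=
    (klFun_sub_sq_div_two_isBigO.comp_tendsto (hg₀ ▸ hdiff.continuousAt.tendsto)).trans
      (hsub.pow 3)
  have hsq : (fun x ↦ 1 / 2 * ((g x - 1) ^ 2 - fderiv ℝ g 0 x ^ 2)) =O[𝓝 0] (‖·‖ ^ 3) :=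
    ((hrem.mul (hsub.add hlin)).const_mul_left (1 / 2)).congr (fun x ↦ by ring) fun x ↦ by ring
  exact (hkl.add hsq).congr_left fun x ↦ by ring

end Taylor

theorem sum_mul_log_div_eq_sum_mul_klFun {A : Type*} [Fintype A] {p q : A → ℝ}
    (hp : ∀ a, p a ≠ 0) (hpq : ∑ a, p a = ∑ a, q a) :
    ∑ a, q a * Real.log (q a / p a) = ∑ a, p a * klFun (q a / p a) := by
  have h : ∀ a, p a * klFun (q a / p a) = q a * Real.log (q a / p a) + (p a - q a) := fun a ↦ by
    rw [klFun_apply]; field_simp [hp a]; ring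
  simp only [h, Finset.sum_add_distrib, Finset.sum_sub_distrib, hpq, sub_self, add_zero]

theorem sum_sum_mul_gram_mul_eq_sum_mul_sq {ι A : Type*} [Fintype ι] [DecidableEq ι] [Fintype A]
    (w : A → ℝ) (ℓ : A → EuclideanSpace ℝ ι →L[ℝ] ℝ) (x : EuclideanSpace ℝ ι) :
    ∑ i, ∑ j, x i * (∑ a, w a * ℓ a (EuclideanSpace.single i 1) *
      ℓ a (EuclideanSpace.single j 1)) * x j = ∑ a, w a * ℓ a x ^ 2 := by
  have hℓ : ∀ a, ℓ a x = ∑ i, x i * ℓ a (EuclideanSpace.single i 1) := fun a ↦ by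
    conv_lhs => rw [← (EuclideanSpace.basisFun ι ℝ).sum_repr x]
    simp
  simp only [hℓ, sq, Finset.mul_sum, Finset.sum_mul]
  simp_rw [Finset.sum_comm (s := (Finset.univ : Finset ι)) (t := (Finset.univ : Finset A))]
  exact Finset.sum_congr rfl fun a _ ↦ Finset.sum_congr rfl fun i _ ↦
    Finset.sum_congr rfl fun j _ ↦ by ring

theorem kl_second_order_taylor_general {A : Type*} [Fintype A] {D : ℕ}
    (f : EuclideanSpace ℝ (Fin D) → A → ℝ)
    (hpos : ∀ θ a, 0 < f θ a)
    (hsum : ∀ θ, ∑ a, f θ a = 1)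
    (hdiff : ∀ a, ContDiff ℝ 3 (fun θ => f θ a))
    (KL : EuclideanSpace ℝ (Fin D) → EuclideanSpace ℝ (Fin D) → ℝ)
    (hKL : ∀ θ' θ, KL θ' θ = ∑ a, f θ' a * Real.log (f θ' a / f θ a))
    (θ : EuclideanSpace ℝ (Fin D))
    (J : Matrix (Fin D) (Fin D) ℝ)
    (hJ : ∀ i j, J i j = ∑ a, f θ a *
      fderiv ℝ (fun θ' => Real.log (f θ' a)) θ (EuclideanSpace.single i 1) *
      fderiv ℝ (fun θ' => Real.log (f θ' a)) θ (EuclideanSpace.single j 1)) :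
    (fun δ : EuclideanSpace ℝ (Fin D) =>
        KL (θ + δ) θ - (1 / 2) * ∑ i, ∑ j, δ i * J i j * δ j)
      =O[nhds 0] (fun δ => ‖δ‖ ^ 3) := by
  set ratio : A → EuclideanSpace ℝ (Fin D) → ℝ := fun a δ ↦ f (θ + δ) a / f θ a
  have hratio : ∀ a, ContDiffAt ℝ 2 (ratio a) 0 := fun a ↦
    (((hdiff a).comp (contDiff_const.add contDiff_id)).div_const _).contDiffAt.of_le
      (by norm_num)
  have hscore : ∀ a, fderiv ℝ (ratio a) 0 = fderiv ℝ (fun θ' => Real.log (f θ' a)) θ := by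
    intro a
    have hf : HasFDerivAt (fun θ' ↦ f θ' a) (fderiv ℝ (fun θ' ↦ f θ' a) θ) θ :=
      ((hdiff a).differentiable (by norm_num) θ).hasFDerivAt
    have hr : HasFDerivAt (ratio a) ((f θ a)⁻¹ • fderiv ℝ (fun θ' ↦ f θ' a) θ) 0 := by
      simpa only [ratio, div_eq_inv_mul] using
        ((hasFDerivAt_comp_add_left θ).2 (by rwa [add_zero])).const_mul (f θ a)⁻¹
    rw [hr.fderiv, (hf.log (hpos θ a).ne').fderiv]
  have hexpand : ∀ δ, KL (θ + δ) θ - (1 / 2) * ∑ i, ∑ j, δ i * J i j * δ j =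
      ∑ a, f θ a * (klFun (ratio a δ) - fderiv ℝ (ratio a) 0 δ ^ 2 / 2) := by
    intro δ
    simp only [hJ]
    rw [hKL, sum_mul_log_div_eq_sum_mul_klFun (fun a ↦ (hpos θ a).ne')
      ((hsum θ).trans (hsum _).symm), sum_sum_mul_gram_mul_eq_sum_mul_sq, Finset.mul_sum,
      ← Finset.sum_sub_distrib]
    exact Finset.sum_congr rfl fun a _ ↦ by rw [hscore]; ring
  simp only [hexpand]
  exact IsBigO.fun_sum fun a _ ↦ (klFun_comp_sub_sq_div_two_isBigO (hratio a)
    (by simp [ratio, (hpos θ a).ne'])).const_mul_left _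

/-- For every parameter `θ ∈ ℝ^D`, the KL divergence admits the second-order Taylor
expansion `KL (θ + δ) θ = (1/2) δᵀ J(θ) δ + O(‖δ‖³)` as `δ → 0`. -/
theorem kl_second_order_taylor {A : Type*} [Fintype A] [Nonempty A] {D : ℕ}
    (f : EuclideanSpace ℝ (Fin D) → A → ℝ)
    (hpos : ∀ θ a, 0 < f θ a)
    (hsum : ∀ θ, ∑ a, f θ a = 1)
    (hdiff : ∀ a, ContDiff ℝ 3 (fun θ => f θ a))
    (KL : EuclideanSpace ℝ (Fin D) → EuclideanSpace ℝ (Fin D) → ℝ)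
    (hKL : ∀ θ' θ, KL θ' θ = ∑ a, f θ' a * Real.log (f θ' a / f θ a))
    (θ : EuclideanSpace ℝ (Fin D))
    (J : Matrix (Fin D) (Fin D) ℝ)
    (hJ : ∀ i j, J i j = ∑ a, f θ a *
      fderiv ℝ (fun θ' => Real.log (f θ' a)) θ (EuclideanSpace.single i 1) *
      fderiv ℝ (fun θ' => Real.log (f θ' a)) θ (EuclideanSpace.single j 1)) :
    (fun δ : EuclideanSpace ℝ (Fin D) =>
        KL (θ + δ) θ - (1 / 2) * ∑ i, ∑ j, δ i * J i j * δ j)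
      =O[nhds 0] (fun δ => ‖δ‖ ^ 3) :=
  kl_second_order_taylor_general f hpos hsum hdiff KL hKL θ J hJ
end

section
/- For every parameter θ ∈ ℝ^D, there exist ε > 0 and M ≥ 0 such that for every probability space (Ω, 𝓕, P) and every measurable random vector δ : Ω → ℝ^D with ‖δ‖ ≤ ε almost surely, the expected Kullback–Leibler divergence satisfies |E[KL(θ + δ, θ)] − (1/2) E[δᵀ J(θ) δ]| ≤ M · E[‖δ‖³]. -/
open MeasureTheory Metric Filter Topology Asymptotics

/-!
Write `KL (θ + v) θ = R (θ + v) + ½ vᵀ J v`, where `R ψ` is the sum over `a` of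
`f ψ a * log (f ψ a / f θ a) - (Df_a θ (ψ - θ))² / (2 f θ a)`. The remainder `R` vanishes at `θ`
together with its first two derivatives: these are `∑ₐ Df_a θ` and `∑ₐ D²f_a θ`, which are zero
because `∑ₐ f_a ≡ 1`. Three applications of the mean value theorem, with the third derivative
bounded near `θ`, give `|R (θ + v)| ≤ M ‖v‖³` for small `v`, and integrating this bound proves
the estimate.
-/

section TaylorBound

variable {E F : Type*} [NormedAddCommGroup E] [NormedSpace ℝ E] [NormedAddCommGroup F]
  [NormedSpace ℝ F]

theorem norm_le_mul_norm_sub_pow_succ_of_norm_fderiv_le {f : E → F} {f' : E → E →L[ℝ] F}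
    {θ : E} {r C : ℝ} {n : ℕ} (hC : 0 ≤ C) (hf : ∀ x ∈ closedBall θ r, HasFDerivAt f (f' x) x)
    (hf' : ∀ x ∈ closedBall θ r, ‖f' x‖ ≤ C * ‖x - θ‖ ^ n) (hθ : f θ = 0) :
    ∀ x ∈ closedBall θ r, ‖f x‖ ≤ C * ‖x - θ‖ ^ (n + 1) := by
  intro x hx
  have hball : closedBall θ ‖x - θ‖ ⊆ closedBall θ r :=
    closedBall_subset_closedBall (mem_closedBall_iff_norm.mp hx)
  have hbound : ∀ y ∈ closedBall θ ‖x - θ‖, ‖f' y‖ ≤ C * ‖x - θ‖ ^ n := fun y hy =>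
    (hf' y (hball hy)).trans <| mul_le_mul_of_nonneg_left
      (pow_le_pow_left₀ (norm_nonneg _) (mem_closedBall_iff_norm.mp hy) n) hC
  have := (convex_closedBall θ ‖x - θ‖).norm_image_sub_le_of_norm_hasFDerivWithin_le
    (fun y hy => (hf y (hball hy)).hasFDerivWithinAt) hbound
    (mem_closedBall_self (norm_nonneg _)) (mem_closedBall_iff_norm.mpr le_rfl)
  rwa [hθ, sub_zero, mul_assoc, ← pow_succ] at this

theorem isBigO_norm_sub_pow_three_of_fderiv_fderiv_eq_zero {g : E → F} {θ : E}
    (hg : ContDiff ℝ 3 g) (h₀ : g θ = 0) (h₁ : fderiv ℝ g θ = 0)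
    (h₂ : fderiv ℝ (fderiv ℝ g) θ = 0) :
    g =O[𝓝 θ] fun x => ‖x - θ‖ ^ 3 := by
  -- without these, instance search fails to find the norm on `E →L[ℝ] E →L[ℝ] E →L[ℝ] F`
  let _ : NormedAddCommGroup (E →L[ℝ] E →L[ℝ] F) := inferInstance
  let _ : NormedSpace ℝ (E →L[ℝ] E →L[ℝ] F) := inferInstance
  have hg₁ : ContDiff ℝ 2 (fderiv ℝ g) := hg.fderiv_right (by norm_num)
  have hg₂ : ContDiff ℝ 1 (fderiv ℝ (fderiv ℝ g)) := hg₁.fderiv_right (by norm_num)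
  obtain ⟨r, hr, hbound⟩ := nhds_basis_closedBall.eventually_iff.mp <|
    ((hg₂.continuous_fderiv one_ne_zero).continuousAt (x := θ)).norm.eventually_lt
      continuousAt_const (lt_add_one _)
  set C := ‖fderiv ℝ (fderiv ℝ (fderiv ℝ g)) θ‖ + 1
  have hC : 0 ≤ C := by positivity
  have hbound₂ := norm_le_mul_norm_sub_pow_succ_of_norm_fderiv_le (n := 0) hC
    (fun x _ => (hg₂.differentiable one_ne_zero x).hasFDerivAt)
    (fun x hx => by simpa using (hbound hx).le) h₂
  have hbound₁ := norm_le_mul_norm_sub_pow_succ_of_norm_fderiv_le hC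
    (fun x _ => (hg₁.differentiable two_ne_zero x).hasFDerivAt) hbound₂ h₁
  have hbound₀ := norm_le_mul_norm_sub_pow_succ_of_norm_fderiv_le hC
    (fun x _ => (hg.differentiable three_ne_zero x).hasFDerivAt) hbound₁ h₀
  refine .of_bound C (mem_of_superset (closedBall_mem_nhds θ hr) fun x hx => ?_)
  simpa using hbound₀ x hx

end TaylorBound

theorem sum_fderiv_eq_zero_of_sum_eq_const {E F A : Type*} [NormedAddCommGroup E] [NormedSpace ℝ E]
    [NormedAddCommGroup F] [NormedSpace ℝ F] [Fintype A] {φ : A → E → F} {c : F}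
    (hφ : ∀ a, Differentiable ℝ (φ a)) (hsum : ∀ x, ∑ a, φ a x = c) (x : E) :
    ∑ a, fderiv ℝ (φ a) x = 0 := by
  rw [← fderiv_fun_sum fun a _ => hφ a x, funext hsum, fderiv_const_apply]

theorem quadForm_eq_sum_mul_sq {ι A : Type*} [Fintype ι] [DecidableEq ι] [Fintype A] (w : A → ℝ)
    (ℓ : A → EuclideanSpace ℝ ι →L[ℝ] ℝ) (J : Matrix ι ι ℝ)
    (hJ : ∀ i j, J i j = ∑ a, w a * ℓ a (EuclideanSpace.single i 1) *
      ℓ a (EuclideanSpace.single j 1))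
    (v : EuclideanSpace ℝ ι) :
    ∑ i, ∑ j, v i * J i j * v j = ∑ a, w a * ℓ a v ^ 2 := by
  have hℓ : ∀ a, ℓ a v = ∑ i, v i * ℓ a (EuclideanSpace.single i 1) := by
    intro a
    conv_lhs => rw [← (EuclideanSpace.basisFun ι ℝ).sum_repr v]
    simp [map_sum]
  simp_rw [hℓ, hJ, sq, Finset.sum_mul_sum, Finset.mul_sum, Finset.sum_mul]
  refine (Finset.sum_congr rfl fun i _ => Finset.sum_comm).trans (Finset.sum_comm.trans ?_)
  refine Finset.sum_congr rfl fun a _ => Finset.sum_congr rfl fun i _ =>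
    Finset.sum_congr rfl fun j _ => ?_
  ring

theorem norm_integral_le_mul_integral_norm_pow {Ω E F : Type*} [MeasurableSpace Ω]
    {μ : Measure Ω} [IsFiniteMeasure μ] [NormedAddCommGroup E] [NormedAddCommGroup F]
    [NormedSpace ℝ F] {δ : Ω → E} {h : E → F} {ε C : ℝ} {n : ℕ}
    (hδ : AEStronglyMeasurable δ μ) (hδε : ∀ᵐ ω ∂μ, ‖δ ω‖ ≤ ε)
    (hh : ∀ v, ‖v‖ ≤ ε → ‖h v‖ ≤ C * ‖v‖ ^ n) :
    ‖∫ ω, h (δ ω) ∂μ‖ ≤ C * ∫ ω, ‖δ ω‖ ^ n ∂μ := by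
  have hint : Integrable (fun ω => ‖δ ω‖ ^ n) μ :=
    .of_bound (hδ.norm.pow n) (ε ^ n) <| hδε.mono fun ω hω => by
      simpa using pow_le_pow_left₀ (norm_nonneg _) hω n
  rw [← integral_const_mul]
  exact norm_integral_le_of_norm_le (hint.const_mul C) (hδε.mono fun ω hω => hh _ hω)

theorem Continuous.integrable_comp_of_ae_norm_le {Ω E F : Type*} [MeasurableSpace Ω]
    {μ : Measure Ω} [IsFiniteMeasure μ] [NormedAddCommGroup E] [ProperSpace E]
    [NormedAddCommGroup F] {δ : Ω → E} {h : E → F} {ε : ℝ} (hh : Continuous h)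
    (hδ : AEStronglyMeasurable δ μ) (hδε : ∀ᵐ ω ∂μ, ‖δ ω‖ ≤ ε) :
    Integrable (fun ω => h (δ ω)) μ := by
  obtain ⟨C, hC⟩ := (isCompact_closedBall (0 : E) ε).exists_bound_of_continuousOn hh.continuousOn
  exact .of_bound (hh.comp_aestronglyMeasurable hδ) C <|
    hδε.mono fun ω hω => hC _ (mem_closedBall_zero_iff.mpr hω)

section KLTerm

variable {E : Type*} [NormedAddCommGroup E] [NormedSpace ℝ E] {p : E → ℝ} {θ ψ : E}

noncomputable def klTermRemainder (p : E → ℝ) (θ ψ : E) : ℝ :=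
  p ψ * (Real.log (p ψ) - Real.log (p θ)) - fderiv ℝ p θ (ψ - θ) ^ 2 / (2 * p θ)

@[simp]
theorem klTermRemainder_self : klTermRemainder p θ θ = 0 := by
  simp [klTermRemainder]

theorem hasFDerivAt_klTermRemainder (hp : DifferentiableAt ℝ p ψ) (hψ : p ψ ≠ 0) :
    HasFDerivAt (klTermRemainder p θ)
      ((Real.log (p ψ) - Real.log (p θ) + 1) • fderiv ℝ p ψ
        - (fderiv ℝ p θ (ψ - θ) / p θ) • fderiv ℝ p θ) ψ := by
  set L := fderiv ℝ p θ
  have hlin : HasFDerivAt (fun x => L (x - θ)) L ψ := by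
    simpa only [map_sub] using L.hasFDerivAt.sub_const (L θ)
  have hent := hp.hasFDerivAt.mul ((hp.hasFDerivAt.log hψ).sub_const (Real.log (p θ)))
  have hquad := (hlin.pow 2).mul_const (2 * p θ)⁻¹
  have hfun : klTermRemainder p θ =
      (p * fun x => Real.log (p x) - Real.log (p θ)) - fun y => L (y - θ) ^ 2 * (2 * p θ)⁻¹ := by
    funext x
    simp only [klTermRemainder, Pi.mul_apply, Pi.sub_apply, div_eq_mul_inv, L]
  rw [hfun]
  refine (hent.sub hquad).congr_fderiv ?_
  ext u
  simp only [mul_inv_rev, map_sub, Nat.add_one_sub_one, pow_one, nsmul_eq_mul, Nat.cast_ofNat,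
    sub_apply, add_apply, smul_apply, smul_eq_mul]
  field_simp
  ring

theorem fderiv_klTermRemainder (hp : Differentiable ℝ p) (hp₀ : ∀ x, p x ≠ 0) :
    fderiv ℝ (klTermRemainder p θ) = fun ψ =>
      (Real.log (p ψ) - Real.log (p θ) + 1) • fderiv ℝ p ψ
        - (fderiv ℝ p θ (ψ - θ) / p θ) • fderiv ℝ p θ :=
  funext fun ψ => (hasFDerivAt_klTermRemainder (hp ψ) (hp₀ ψ)).fderiv

theorem fderiv_klTermRemainder_self (hp : DifferentiableAt ℝ p θ) (hθ : p θ ≠ 0) :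
    fderiv ℝ (klTermRemainder p θ) θ = fderiv ℝ p θ := by
  simp [(hasFDerivAt_klTermRemainder hp hθ).fderiv]

theorem fderiv_fderiv_klTermRemainder_self (hp : ContDiff ℝ 2 p) (hp₀ : ∀ x, p x ≠ 0) :
    fderiv ℝ (fderiv ℝ (klTermRemainder p θ)) θ = fderiv ℝ (fderiv ℝ p) θ := by
  set L := fderiv ℝ p θ
  have hdp := (hp.fderiv_right (m := 1) le_rfl).differentiable one_ne_zero θ
  have hp' := hp.differentiable two_ne_zero
  have hlog := ((hp' θ).hasFDerivAt.log (hp₀ θ)).sub_const (Real.log (p θ)) |>.add_const 1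
  have hlin : HasFDerivAt (fun x => L (x - θ) / p θ) ((p θ)⁻¹ • L) θ := by
    simpa only [map_sub, div_eq_inv_mul] using (L.hasFDerivAt.sub_const (L θ)).const_mul (p θ)⁻¹
  rw [fderiv_klTermRemainder hp' hp₀]
  refine ((hlog.fun_smul hdp.hasFDerivAt).sub
    (hlin.fun_smul (hasFDerivAt_const L θ))).fderiv.trans ?_
  -- the two contributions `(p θ)⁻¹ • L (u) • L` cancel
  ext u v
  simp [L]

theorem contDiff_klTermRemainder {n : WithTop ℕ∞} (hp : ContDiff ℝ n p) (hp₀ : ∀ x, p x ≠ 0) :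
    ContDiff ℝ n (klTermRemainder p θ) := by
  unfold klTermRemainder
  have hlin : ContDiff ℝ n fun ψ => fderiv ℝ p θ (ψ - θ) :=
    (fderiv ℝ p θ).contDiff.comp (contDiff_id.sub contDiff_const)
  exact (hp.mul ((hp.log hp₀).sub contDiff_const)).sub ((hlin.pow 2).div_const _)

theorem mul_log_div_eq_klTermRemainder_add (hp : DifferentiableAt ℝ p θ) (hθ : p θ ≠ 0)
    (hψ : p ψ ≠ 0) :
    p ψ * Real.log (p ψ / p θ) = klTermRemainder p θ ψ
      + p θ * fderiv ℝ (fun x => Real.log (p x)) θ (ψ - θ) ^ 2 / 2 := by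
  rw [klTermRemainder, fderiv.log hp hθ, Real.log_div hψ hθ]
  simp only [FunLike.coe_smul, Pi.smul_apply, smul_eq_mul]
  field_simp
  ring

end KLTerm

section KL

variable {E A : Type*} [NormedAddCommGroup E] [NormedSpace ℝ E] [Fintype A] {f : E → A → ℝ}

noncomputable def klRemainder (f : E → A → ℝ) (θ ψ : E) : ℝ :=
  ∑ a, klTermRemainder (fun x => f x a) θ ψ

theorem contDiff_klRemainder {n : WithTop ℕ∞} (hf : ∀ a, ContDiff ℝ n fun x => f x a)
    (hf₀ : ∀ x a, f x a ≠ 0) (θ : E) : ContDiff ℝ n (klRemainder f θ) :=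
  .sum fun a _ => contDiff_klTermRemainder (hf a) (hf₀ · a)

theorem isBigO_klRemainder (hf₀ : ∀ x a, f x a ≠ 0) (hsum : ∀ x, ∑ a, f x a = 1)
    (hf : ∀ a, ContDiff ℝ 3 fun x => f x a) (θ : E) :
    klRemainder f θ =O[𝓝 θ] fun ψ => ‖ψ - θ‖ ^ 3 := by
  have hR (a : A) : ContDiff ℝ 3 (klTermRemainder (fun x => f x a) θ) :=
    contDiff_klTermRemainder (hf a) (hf₀ · a)
  have hsum₁ : ∀ x, ∑ a, fderiv ℝ (fun x => f x a) x = 0 :=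
    sum_fderiv_eq_zero_of_sum_eq_const (fun a => (hf a).differentiable (by norm_num)) hsum
  have hsum₂ := sum_fderiv_eq_zero_of_sum_eq_const
    (fun a => ((hf a).fderiv_right (m := 2) (by norm_num)).differentiable (by norm_num)) hsum₁ θ
  have hderiv : fderiv ℝ (klRemainder f θ) =
      fun ψ => ∑ a, fderiv ℝ (klTermRemainder (fun x => f x a) θ) ψ :=
    funext fun ψ => fderiv_fun_sum fun a _ => (hR a).differentiable (by norm_num) ψ
  refine isBigO_norm_sub_pow_three_of_fderiv_fderiv_eq_zero (contDiff_klRemainder hf hf₀ θ)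
    (by simp [klRemainder]) ?_ ?_
  · rw [hderiv]
    simpa only [fderiv_klTermRemainder_self ((hf _).differentiable (by norm_num) θ) (hf₀ θ _)]
      using hsum₁ θ
  · rw [hderiv, fderiv_fun_sum fun a _ =>
      ((hR a).fderiv_right (m := 2) (by norm_num)).differentiable (by norm_num) θ]
    simpa only [fderiv_fderiv_klTermRemainder_self ((hf _).of_le (by norm_num)) (hf₀ · _)]
      using hsum₂

end KL

theorem sum_mul_log_div_eq_klRemainder_add {ι A : Type*} [Fintype ι] [DecidableEq ι] [Fintype A]
    {f : EuclideanSpace ℝ ι → A → ℝ} {θ : EuclideanSpace ℝ ι} {J : Matrix ι ι ℝ}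
    (hf : ∀ a, DifferentiableAt ℝ (fun x => f x a) θ) (hf₀ : ∀ x a, f x a ≠ 0)
    (hJ : ∀ i j, J i j = ∑ a, f θ a *
      fderiv ℝ (fun x => Real.log (f x a)) θ (EuclideanSpace.single i 1) *
      fderiv ℝ (fun x => Real.log (f x a)) θ (EuclideanSpace.single j 1))
    (v : EuclideanSpace ℝ ι) :
    ∑ a, f (θ + v) a * Real.log (f (θ + v) a / f θ a) =
      klRemainder f θ (θ + v) + 1 / 2 * ∑ i, ∑ j, v i * J i j * v j := by
  rw [klRemainder, quadForm_eq_sum_mul_sq _ _ J hJ, Finset.mul_sum, ← Finset.sum_add_distrib]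
  refine Finset.sum_congr rfl fun a _ => ?_
  rw [mul_log_div_eq_klTermRemainder_add (hf a) (hf₀ θ a) (hf₀ _ a), add_sub_cancel_left]
  ring

theorem expected_kl_close_to_fisher_quadratic_general {A : Type*} [Fintype A] {D : ℕ}
    (f : EuclideanSpace ℝ (Fin D) → A → ℝ)
    (hpos : ∀ θ a, 0 < f θ a)
    (hsum : ∀ θ, ∑ a, f θ a = 1)
    (hdiff : ∀ a, ContDiff ℝ 3 (fun θ => f θ a))
    (KL : EuclideanSpace ℝ (Fin D) → EuclideanSpace ℝ (Fin D) → ℝ)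
    (hKL : ∀ θ' θ, KL θ' θ = ∑ a, f θ' a * Real.log (f θ' a / f θ a))
    (θ : EuclideanSpace ℝ (Fin D))
    (J : Matrix (Fin D) (Fin D) ℝ)
    (hJ : ∀ i j, J i j = ∑ a, f θ a *
      fderiv ℝ (fun θ' => Real.log (f θ' a)) θ (EuclideanSpace.single i 1) *
      fderiv ℝ (fun θ' => Real.log (f θ' a)) θ (EuclideanSpace.single j 1)) :
    ∃ ε > (0 : ℝ), ∃ M ≥ (0 : ℝ),
      ∀ (Ω : Type) [MeasurableSpace Ω] (μ : Measure Ω) [IsProbabilityMeasure μ]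
        (δ : Ω → EuclideanSpace ℝ (Fin D)), Measurable δ →
        (∀ᵐ ω ∂μ, ‖δ ω‖ ≤ ε) →
        |(∫ ω, KL (θ + δ ω) θ ∂μ)
            - (1 / 2) * ∫ ω, ∑ i, ∑ j, δ ω i * J i j * δ ω j ∂μ|
          ≤ M * ∫ ω, ‖δ ω‖ ^ 3 ∂μ := by
  have hf₀ : ∀ x a, f x a ≠ 0 := fun x a => (hpos x a).ne'
  have hR : Continuous fun v => klRemainder f θ (θ + v) :=
    (contDiff_klRemainder hdiff hf₀ θ).continuous.comp (continuous_const_add θ)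
  obtain ⟨M, hM, hRM⟩ := (isBigO_klRemainder hf₀ hsum hdiff θ).exists_pos
  obtain ⟨ε, hε, hRε⟩ := nhds_basis_closedBall.eventually_iff.mp hRM.bound
  refine ⟨ε, hε, M, hM.le, fun Ω _ μ _ δ hδ hδε => ?_⟩
  have hδ' : AEStronglyMeasurable δ μ := hδ.aestronglyMeasurable
  have hKL_eq (ω : Ω) := (hKL _ θ).trans <| sum_mul_log_div_eq_klRemainder_add
    (fun a => (hdiff a).differentiable (by norm_num) θ) hf₀ hJ (δ ω)
  rw [integral_congr_ae (ae_of_all _ hKL_eq),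
    integral_add (hR.integrable_comp_of_ae_norm_le hδ' hδε)
      (((by fun_prop : Continuous fun v : EuclideanSpace ℝ (Fin D) =>
        ∑ i, ∑ j, v i * J i j * v j).integrable_comp_of_ae_norm_le hδ' hδε).const_mul _),
    integral_const_mul, add_sub_cancel_right, ← Real.norm_eq_abs]
  refine norm_integral_le_mul_integral_norm_pow (h := fun v => klRemainder f θ (θ + v))
    hδ' hδε fun v hv => ?_
  have := hRε (mem_closedBall_iff_norm.mpr (by rwa [add_sub_cancel_left]) : θ + v ∈ closedBall θ ε)
  rwa [add_sub_cancel_left, norm_pow, norm_norm] at this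

/-- For every parameter `θ ∈ ℝ^D`, there exist `ε > 0` and `M ≥ 0` such that for every
probability space and every random vector `δ` with `‖δ‖ ≤ ε` almost surely,
`|E[KL (θ + δ) θ] − (1/2) E[δᵀ J(θ) δ]| ≤ M · E[‖δ‖³]`. -/
theorem expected_kl_close_to_fisher_quadratic {A : Type*} [Fintype A] [Nonempty A] {D : ℕ}
    (f : EuclideanSpace ℝ (Fin D) → A → ℝ)
    (hpos : ∀ θ a, 0 < f θ a)
    (hsum : ∀ θ, ∑ a, f θ a = 1)
    (hdiff : ∀ a, ContDiff ℝ 3 (fun θ => f θ a))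
    (KL : EuclideanSpace ℝ (Fin D) → EuclideanSpace ℝ (Fin D) → ℝ)
    (hKL : ∀ θ' θ, KL θ' θ = ∑ a, f θ' a * Real.log (f θ' a / f θ a))
    (θ : EuclideanSpace ℝ (Fin D))
    (J : Matrix (Fin D) (Fin D) ℝ)
    (hJ : ∀ i j, J i j = ∑ a, f θ a *
      fderiv ℝ (fun θ' => Real.log (f θ' a)) θ (EuclideanSpace.single i 1) *
      fderiv ℝ (fun θ' => Real.log (f θ' a)) θ (EuclideanSpace.single j 1)) :
    ∃ ε > (0 : ℝ), ∃ M ≥ (0 : ℝ),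
      ∀ (Ω : Type) [MeasurableSpace Ω] (μ : Measure Ω) [IsProbabilityMeasure μ]
        (δ : Ω → EuclideanSpace ℝ (Fin D)), Measurable δ →
        (∀ᵐ ω ∂μ, ‖δ ω‖ ≤ ε) →
        |(∫ ω, KL (θ + δ ω) θ ∂μ)
            - (1 / 2) * ∫ ω, ∑ i, ∑ j, δ ω i * J i j * δ ω j ∂μ|
          ≤ M * ∫ ω, ‖δ ω‖ ^ 3 ∂μ :=
  expected_kl_close_to_fisher_quadratic_general f hpos hsum hdiff KL hKL θ J hJ
end
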